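/- (Lipschitz continuity of the mapping λ ↦ h(λ).) For every real κ̃ ≥ 1 and all λ₁, λ₂ ∈ [0, 1], ‖h(λ₁) − h(λ₂)‖ ≤ √((6π² + 1)/12) · κ̃ · |λ₁ − λ₂|. -/

import Mathlib

/-- The filter function `f`: `f(λ) = 1/(2κ̃λ)` for `λ ≥ 1/κ̃`,
`f(λ) = -(1/2)cos(πκ̃λ)` for `1/(2κ̃) ≤ λ ≤ 1/κ̃`, and `f(λ) = 0` for `λ ≤ 1/(2κ̃)`. -/
noncomputable def ff (κ lam : ℝ) : ℝ :=
  if 1 / κ ≤ lam then 1 / (2 * κ * lam)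
  else if 1 / (2 * κ) ≤ lam then -(1 / 2) * Real.cos (Real.pi * κ * lam)
  else 0

/-- The filter function `g`: `g(λ) = 0` for `λ ≥ 1/κ̃`,
`g(λ) = (1/2)sin(πκ̃λ)` for `1/(2κ̃) ≤ λ ≤ 1/κ̃`, and `g(λ) = 1/2` for `λ ≤ 1/(2κ̃)`. -/
noncomputable def gg (κ lam : ℝ) : ℝ :=
  if 1 / κ ≤ lam then 0
  else if 1 / (2 * κ) ≤ lam then (1 / 2) * Real.sin (Real.pi * κ * lam)
  else 1 / 2

/-- The flag-register state `h(λ) = (f(λ), g(λ), √(1 - f(λ)² - g(λ)²))` as a vector in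
Euclidean `ℝ³`. -/
noncomputable def hvec (κ lam : ℝ) : EuclideanSpace ℝ (Fin 3) :=
  (WithLp.equiv 2 (Fin 3 → ℝ)).symm
    ![ff κ lam, gg κ lam, Real.sqrt (1 - ff κ lam ^ 2 - gg κ lam ^ 2)]

/-! Every coordinate of `h` depends on `κ̃λ` only, so it suffices to treat `κ̃ = 1` and rescale.
For `κ̃ = 1`, `f` and `g` are continuous and smooth on each of `(-∞, 1/2]`, `[1/2, 1]`, `[1, ∞)`
with derivatives bounded by `π/2`, and Lipschitz bounds glue across the breakpoints. Since
`f² + g² = 1/4` on `(-∞, 1]`, the third coordinate is constant there and equals `√(1 - 1/(4t²))`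
beyond, with derivative at most `1/(2√3)`. The coordinate constants combine in `ℓ²` to
`√(π²/4 + π²/4 + 1/12) = √((6π² + 1)/12)`. -/

open Set Real NNReal

theorem LipschitzOnWith.congr {α β : Type*} [PseudoEMetricSpace α] [PseudoEMetricSpace β]
    {K : ℝ≥0} {f g : α → β} {s : Set α} (hf : LipschitzOnWith K f s) (h : EqOn g f s) :
    LipschitzOnWith K g s := fun x hx y hy => by
  rw [h hx, h hy]; exact hf hx hy

theorem LipschitzOnWith.union_of_isGreatest_of_isLeast {β : Type*} [PseudoMetricSpace β]
    {f : ℝ → β} {K : ℝ≥0} {s t : Set ℝ} {b : ℝ} (hs : LipschitzOnWith K f s)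
    (ht : LipschitzOnWith K f t) (hbs : IsGreatest s b) (hbt : IsLeast t b) :
    LipschitzOnWith K f (s ∪ t) := by
  have cross : ∀ x ∈ s, ∀ y ∈ t, dist (f x) (f y) ≤ K * dist x y := fun x hx y hy => by
    have hxy : dist x b + dist b y = dist x y := by
      rw [Real.dist_eq, Real.dist_eq, Real.dist_eq, abs_of_nonpos (sub_nonpos.2 (hbs.2 hx)),
        abs_of_nonpos (sub_nonpos.2 (hbt.2 hy)), abs_of_nonpos (by linarith [hbs.2 hx, hbt.2 hy])]
      ring
    calc dist (f x) (f y) ≤ dist (f x) (f b) + dist (f b) (f y) := dist_triangle _ _ _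
      _ ≤ K * dist x b + K * dist b y :=
        add_le_add (hs.dist_le_mul x hx b hbs.1) (ht.dist_le_mul b hbt.1 y hy)
      _ = K * dist x y := by rw [← mul_add, hxy]
  refine LipschitzOnWith.of_dist_le_mul fun x hx y hy => ?_
  rcases hx with hx | hx <;> rcases hy with hy | hy
  · exact hs.dist_le_mul x hx y hy
  · exact cross x hx y hy
  · rw [dist_comm, dist_comm x]; exact cross y hy x hx
  · exact ht.dist_le_mul x hx y hy

theorem Convex.lipschitzOnWith_of_abs_hasDerivAt_le {f f' : ℝ → ℝ} {s : Set ℝ} {K : ℝ≥0}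
    (hs : Convex ℝ s) (hf : ∀ x ∈ s, HasDerivAt f (f' x) x) (bound : ∀ x ∈ s, |f' x| ≤ K) :
    LipschitzOnWith K f s :=
  hs.lipschitzOnWith_of_nnnorm_hasDerivWithin_le (fun x hx => (hf x hx).hasDerivWithinAt)
    fun x hx => by rw [← NNReal.coe_le_coe, coe_nnnorm, Real.norm_eq_abs]; exact bound x hx

theorem EuclideanSpace.lipschitzWith_of_forall_lipschitzWith_apply {α ι : Type*}
    [PseudoMetricSpace α] [Fintype ι] {u : α → EuclideanSpace ℝ ι} {K : ι → ℝ≥0}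
    (hu : ∀ i, LipschitzWith (K i) fun x => u x i) :
    LipschitzWith (NNReal.sqrt (∑ i, K i ^ 2)) u := by
  refine LipschitzWith.of_dist_le_mul fun x y => ?_
  rw [EuclideanSpace.dist_eq, Real.coe_sqrt, ← Real.sqrt_sq dist_nonneg,
    ← Real.sqrt_mul (by positivity)]
  refine Real.sqrt_le_sqrt ?_
  rw [NNReal.coe_sum, Finset.sum_mul]
  gcongr with i
  rw [NNReal.coe_pow, ← mul_pow]
  exact pow_le_pow_left₀ dist_nonneg ((hu i).dist_le_mul x y) 2

theorem ff_eq_ff_one_mul {κ : ℝ} (hκ : 0 < κ) (t : ℝ) : ff κ t = ff 1 (κ * t) := by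
  have h1 : 1 / κ ≤ t ↔ 1 / 1 ≤ κ * t := by rw [div_le_iff₀ hκ, div_one, mul_comm]
  have h2 : 1 / (2 * κ) ≤ t ↔ 1 / (2 * 1) ≤ κ * t := by
    rw [div_le_iff₀ (by positivity), mul_one, div_le_iff₀ two_pos]; ring_nf
  simp only [ff, h1, h2, mul_one, mul_assoc]

theorem gg_eq_gg_one_mul {κ : ℝ} (hκ : 0 < κ) (t : ℝ) : gg κ t = gg 1 (κ * t) := by
  have h1 : 1 / κ ≤ t ↔ 1 / 1 ≤ κ * t := by rw [div_le_iff₀ hκ, div_one, mul_comm]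
  have h2 : 1 / (2 * κ) ≤ t ↔ 1 / (2 * 1) ≤ κ * t := by
    rw [div_le_iff₀ (by positivity), mul_one, div_le_iff₀ two_pos]; ring_nf
  simp only [gg, h1, h2, mul_one, mul_assoc]

theorem hvec_eq_hvec_one_mul {κ : ℝ} (hκ : 0 < κ) (t : ℝ) : hvec κ t = hvec 1 (κ * t) := by
  simp only [hvec, ff_eq_ff_one_mul hκ, gg_eq_gg_one_mul hκ]

theorem ff_one_of_le_half {t : ℝ} (ht : t ≤ 1 / 2) : ff 1 t = 0 := by
  rcases ht.lt_or_eq with ht | rfl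
  · rw [ff, if_neg (by linarith), if_neg (by linarith)]
  · norm_num [ff, mul_one_div, cos_pi_div_two]

theorem ff_one_of_mem_Icc {t : ℝ} (ht : t ∈ Icc (1 / 2) 1) :
    ff 1 t = -(1 / 2) * cos (π * t) := by
  rcases ht.2.lt_or_eq with h1 | rfl
  · rw [ff, if_neg (by linarith), if_pos (by linarith [ht.1]), mul_one]
  · norm_num [ff]

theorem ff_one_of_one_le {t : ℝ} (ht : 1 ≤ t) : ff 1 t = (2 * t)⁻¹ := by
  rw [ff, if_pos (by linarith), mul_one, one_div]

theorem gg_one_of_le_half {t : ℝ} (ht : t ≤ 1 / 2) : gg 1 t = 1 / 2 := by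
  rcases ht.lt_or_eq with ht | rfl
  · rw [gg, if_neg (by linarith), if_neg (by linarith)]
  · norm_num [gg, mul_one_div, sin_pi_div_two]

theorem gg_one_of_mem_Icc {t : ℝ} (ht : t ∈ Icc (1 / 2) 1) :
    gg 1 t = 1 / 2 * sin (π * t) := by
  rcases ht.2.lt_or_eq with h1 | rfl
  · rw [gg, if_neg (by linarith), if_pos (by linarith [ht.1]), mul_one]
  · norm_num [gg]

theorem gg_one_of_one_le {t : ℝ} (ht : 1 ≤ t) : gg 1 t = 0 := by
  rw [gg, if_pos (by linarith)]

theorem ff_one_sq_add_gg_one_sq {t : ℝ} (ht : t ≤ 1) : ff 1 t ^ 2 + gg 1 t ^ 2 = 1 / 4 := by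
  rcases le_total t (1 / 2) with h | h
  · rw [ff_one_of_le_half h, gg_one_of_le_half h]; norm_num
  · rw [ff_one_of_mem_Icc ⟨h, ht⟩, gg_one_of_mem_Icc ⟨h, ht⟩]
    linear_combination (1 / 4) * cos_sq_add_sin_sq (π * t)

theorem lipschitzWith_ff_one : LipschitzWith (NNReal.pi / 2) (ff 1) := by
  have hK : ((NNReal.pi / 2 : ℝ≥0) : ℝ) = π / 2 := by simp
  have low : LipschitzOnWith (NNReal.pi / 2) (ff 1) (Iic (1 / 2)) :=
    (LipschitzWith.const' 0).lipschitzOnWith.congr fun t ht => ff_one_of_le_half ht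
  have mid : LipschitzOnWith (NNReal.pi / 2) (ff 1) (Icc (1 / 2) 1) := by
    refine LipschitzOnWith.congr ?_ fun t ht => ff_one_of_mem_Icc ht
    refine (convex_Icc _ _).lipschitzOnWith_of_abs_hasDerivAt_le
      (f' := fun t => π / 2 * sin (π * t)) (fun t _ => ?_) fun t _ => ?_
    · refine ((((hasDerivAt_id t).const_mul π).cos).const_mul (-(1 / 2))).congr_deriv ?_
      simp only [id]; ring
    · rw [hK, abs_mul, abs_of_pos (by positivity)]
      exact mul_le_of_le_one_right (by positivity) (abs_sin_le_one _)
  have high : LipschitzOnWith (NNReal.pi / 2) (ff 1) (Ici 1) := by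
    refine LipschitzOnWith.congr ?_ fun t ht => ff_one_of_one_le ht
    refine (convex_Ici _).lipschitzOnWith_of_abs_hasDerivAt_le
      (f' := fun t => -(2 * t ^ 2)⁻¹) (fun t ht => ?_) fun t ht => ?_
    · have ht : (t : ℝ) ≠ 0 := by linarith [mem_Ici.1 ht]
      refine (((hasDerivAt_id t).const_mul 2).inv (by simpa using ht)).congr_deriv ?_
      simp only [id]; field_simp
    · have ht : (1 : ℝ) ≤ t := ht
      rw [hK, abs_neg, abs_of_pos (by positivity)]
      calc (2 * t ^ 2)⁻¹ ≤ (2 * 1)⁻¹ := by gcongr; nlinarith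
        _ ≤ π / 2 := by linarith [pi_gt_three]
  have lowMid : LipschitzOnWith (NNReal.pi / 2) (ff 1) (Iic 1) := by
    rw [← Iic_union_Icc_eq_Iic (by norm_num : (1 / 2 : ℝ) ≤ 1)]
    exact low.union_of_isGreatest_of_isLeast mid isGreatest_Iic (isLeast_Icc (by norm_num))
  rw [← lipschitzOnWith_univ, ← Iic_union_Ici (a := (1 : ℝ))]
  exact lowMid.union_of_isGreatest_of_isLeast high isGreatest_Iic isLeast_Ici

theorem lipschitzWith_gg_one : LipschitzWith (NNReal.pi / 2) (gg 1) := by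
  have hK : ((NNReal.pi / 2 : ℝ≥0) : ℝ) = π / 2 := by simp
  have low : LipschitzOnWith (NNReal.pi / 2) (gg 1) (Iic (1 / 2)) :=
    (LipschitzWith.const' (1 / 2)).lipschitzOnWith.congr fun t ht => gg_one_of_le_half ht
  have mid : LipschitzOnWith (NNReal.pi / 2) (gg 1) (Icc (1 / 2) 1) := by
    refine LipschitzOnWith.congr ?_ fun t ht => gg_one_of_mem_Icc ht
    refine (convex_Icc _ _).lipschitzOnWith_of_abs_hasDerivAt_le
      (f' := fun t => π / 2 * cos (π * t)) (fun t _ => ?_) fun t _ => ?_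
    · refine ((((hasDerivAt_id t).const_mul π).sin).const_mul (1 / 2)).congr_deriv ?_
      simp only [id]; ring
    · rw [hK, abs_mul, abs_of_pos (by positivity)]
      exact mul_le_of_le_one_right (by positivity) (abs_cos_le_one _)
  have high : LipschitzOnWith (NNReal.pi / 2) (gg 1) (Ici 1) :=
    (LipschitzWith.const' 0).lipschitzOnWith.congr fun t ht => gg_one_of_one_le ht
  have lowMid : LipschitzOnWith (NNReal.pi / 2) (gg 1) (Iic 1) := by
    rw [← Iic_union_Icc_eq_Iic (by norm_num : (1 / 2 : ℝ) ≤ 1)]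
    exact low.union_of_isGreatest_of_isLeast mid isGreatest_Iic (isLeast_Icc (by norm_num))
  rw [← lipschitzOnWith_univ, ← Iic_union_Ici (a := (1 : ℝ))]
  exact lowMid.union_of_isGreatest_of_isLeast high isGreatest_Iic isLeast_Ici

theorem lipschitzWith_sqrt_one_sub_ff_one_sq_sub_gg_one_sq :
    LipschitzWith (2 * NNReal.sqrt 3)⁻¹ fun t => √(1 - ff 1 t ^ 2 - gg 1 t ^ 2) := by
  have hK : (((2 * NNReal.sqrt 3)⁻¹ : ℝ≥0) : ℝ) = (2 * √3)⁻¹ := by simp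
  have low : LipschitzOnWith (2 * NNReal.sqrt 3)⁻¹
      (fun t => √(1 - ff 1 t ^ 2 - gg 1 t ^ 2)) (Iic 1) :=
    (LipschitzWith.const' √(3 / 4)).lipschitzOnWith.congr fun t ht => by
      rw [sub_sub, ff_one_sq_add_gg_one_sq ht]; norm_num
  have high : LipschitzOnWith (2 * NNReal.sqrt 3)⁻¹
      (fun t => √(1 - ff 1 t ^ 2 - gg 1 t ^ 2)) (Ici 1) := by
    refine LipschitzOnWith.congr (f := fun t => √(1 - (4 * t ^ 2)⁻¹)) ?_ fun t ht => by
      rw [ff_one_of_one_le ht, gg_one_of_one_le ht]; ring_nf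
    refine (convex_Ici _).lipschitzOnWith_of_abs_hasDerivAt_le
      (f' := fun t => (4 * t ^ 3 * √(1 - (4 * t ^ 2)⁻¹))⁻¹) (fun t ht => ?_) fun t ht => ?_
    all_goals
      have ht : 1 ≤ t := ht
      have hq : 3 / 4 ≤ 1 - (4 * t ^ 2)⁻¹ := by
        have : (4 * t ^ 2)⁻¹ ≤ 4⁻¹ := inv_anti₀ (by norm_num) (by nlinarith)
        linarith
    · have hin : HasDerivAt (fun t => 1 - (4 * t ^ 2)⁻¹) (2 * t ^ 3)⁻¹ t := by
        refine ((((hasDerivAt_pow 2 t).const_mul 4).inv (by positivity)).const_sub 1).congr_deriv ?_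
        field_simp; ring
      refine (hin.sqrt (by linarith)).congr_deriv ?_
      field_simp; ring
    · have hsqrt : √3 / 2 ≤ √(1 - (4 * t ^ 2)⁻¹) := by
        rw [Real.le_sqrt (by positivity), div_pow, Real.sq_sqrt (by norm_num)] <;> linarith
      rw [hK, abs_inv, abs_of_pos (by positivity)]
      refine inv_anti₀ (by positivity) ?_
      calc 2 * √3 = 4 * 1 * (√3 / 2) := by ring
        _ ≤ 4 * t ^ 3 * √(1 - (4 * t ^ 2)⁻¹) := by gcongr; exact one_le_pow₀ ht
  rw [← lipschitzOnWith_univ, ← Iic_union_Ici (a := (1 : ℝ))]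
  exact low.union_of_isGreatest_of_isLeast high isGreatest_Iic isLeast_Ici

theorem lipschitzWith_hvec_one :
    LipschitzWith (NNReal.sqrt ((6 * NNReal.pi ^ 2 + 1) / 12)) (hvec 1) := by
  have h := EuclideanSpace.lipschitzWith_of_forall_lipschitzWith_apply (u := hvec 1)
    (K := ![NNReal.pi / 2, NNReal.pi / 2, (2 * NNReal.sqrt 3)⁻¹]) fun i => by
      fin_cases i
      exacts [lipschitzWith_ff_one, lipschitzWith_gg_one,
        lipschitzWith_sqrt_one_sub_ff_one_sq_sub_gg_one_sq]
  have hK : ∑ i, ![NNReal.pi / 2, NNReal.pi / 2, (2 * NNReal.sqrt 3)⁻¹] i ^ 2 =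
      (6 * NNReal.pi ^ 2 + 1) / 12 := by
    apply NNReal.eq
    simp only [Fin.sum_univ_three, Matrix.cons_val_zero, Matrix.cons_val_one,
      Matrix.cons_val_two, Matrix.tail_cons, Matrix.head_cons]
    push_cast
    rw [inv_pow, mul_pow, Real.sq_sqrt (by norm_num)]
    ring
  rwa [hK] at h

theorem stmt_14_general (κ : ℝ) (hκ : 1 ≤ κ) (lam₁ lam₂ : ℝ) :
    ‖hvec κ lam₁ - hvec κ lam₂‖ ≤
      Real.sqrt ((6 * Real.pi ^ 2 + 1) / 12) * κ * |lam₁ - lam₂| := by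
  have hκ0 : 0 < κ := by linarith
  have h := lipschitzWith_hvec_one.dist_le_mul (κ * lam₁) (κ * lam₂)
  rw [← hvec_eq_hvec_one_mul hκ0, ← hvec_eq_hvec_one_mul hκ0, dist_eq_norm, Real.dist_eq,
    ← mul_sub, abs_mul, abs_of_pos hκ0, Real.coe_sqrt] at h
  push_cast [NNReal.coe_real_pi] at h
  rwa [← mul_assoc] at h

theorem stmt_14 (κ : ℝ) (hκ : 1 ≤ κ) (lam₁ lam₂ : ℝ)
    (h₁ : lam₁ ∈ Set.Icc (0 : ℝ) 1) (h₂ : lam₂ ∈ Set.Icc (0 : ℝ) 1) :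
    ‖hvec κ lam₁ - hvec κ lam₂‖ ≤
      Real.sqrt ((6 * Real.pi ^ 2 + 1) / 12) * κ * |lam₁ - lam₂| :=
  stmt_14_general κ hκ lam₁ lam₂
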